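/- For b, E > 0, the function z ↦ ∫₀^∞ b·e^{(z−1)ba − Ea²/2} da is strictly increasing and continuous on [0,1], and the equation 1 = ∫₀^∞ b e^{(z−1)ba − Ea²/2} da has a solution z ∈ [0,1) if and only if ∫₀^∞ b e^{−Ea²/2} da > 1, i.e. b·√(π/(2E)) > 1. -/
import Mathlib

open Real MeasureTheory Set

lemma integ_aux (E : ℝ) (hE : 0 < E) (c : ℝ) :
    IntegrableOn (fun a : ℝ => Real.exp (c * a - E * a ^ 2 / 2)) (Ioi 0) := by
  have h : (fun a : ℝ => Real.exp (c * a - E * a ^ 2 / 2)) =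
      fun a : ℝ => Real.exp (c ^ 2 / (2 * E)) * Real.exp (-(E / 2) * (a - c / E) ^ 2) := by
    funext a
    rw [← Real.exp_add]
    congr 1
    field_simp
    ring
  rw [h]
  exact (((integrable_exp_neg_mul_sq (by positivity : (0:ℝ) < E / 2)).comp_sub_right
    (c / E)).const_mul _).integrableOn

lemma strict_lt_int (f g : ℝ → ℝ) (hf : IntegrableOn f (Ioi (0:ℝ)))
    (hg : IntegrableOn g (Ioi (0:ℝ))) (h : ∀ a ∈ Ioi (0:ℝ), f a < g a) :
    (∫ a in Ioi (0:ℝ), f a) < ∫ a in Ioi (0:ℝ), g a := by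
  have hsub : 0 < ∫ a in Ioi (0:ℝ), (g - f) a := by
    rw [setIntegral_pos_iff_support_of_nonneg_ae ?_ (hg.sub hf)]
    · have : Ioi (0:ℝ) ⊆ Function.support (g - f) ∩ Ioi 0 := by
        intro a ha
        exact ⟨fun hc => (h a ha).ne' (sub_eq_zero.1 hc), ha⟩
      have := measure_mono (μ := (volume : Measure ℝ)) this
      rw [Real.volume_Ioi] at this
      exact lt_of_lt_of_le (by simp) this
    · filter_upwards [ae_restrict_mem measurableSet_Ioi] with a ha
      exact sub_nonneg.2 (h a ha).le
  simp only [Pi.sub_apply] at hsub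
  rw [integral_sub hg hf] at hsub
  linarith

/-- Example 2 fitness: the generating integral is strictly increasing and
continuous on `[0,1]`, and a root `z ∈ [0,1)` of `G z = 1` exists iff
`b √(π/(2E)) > 1`. -/
theorem stmt15 (b E : ℝ) (hb : 0 < b) (hE : 0 < E) :
    let G : ℝ → ℝ := fun z =>
      ∫ a in Ioi (0:ℝ), b * Real.exp ((z - 1) * b * a - E * a ^ 2 / 2)
    StrictMonoOn G (Icc 0 1) ∧ ContinuousOn G (Icc 0 1) ∧
    ((∃ z ∈ Ico (0:ℝ) 1, G z = 1) ↔ 1 < b * Real.sqrt (π / (2 * E))) := by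
  intro G
  have hint : ∀ z : ℝ, IntegrableOn
      (fun a : ℝ => b * Real.exp ((z - 1) * b * a - E * a ^ 2 / 2)) (Ioi 0) := by
    intro z
    exact (integ_aux E hE ((z - 1) * b)).const_mul b
  -- strict monotonicity
  have hmono : StrictMonoOn G (Icc 0 1) := by
    intro z hz z' hz' hzz'
    apply strict_lt_int _ _ (hint z) (hint z')
    intro a ha
    have ha' : (0:ℝ) < a := ha
    have hexp : (z - 1) * b * a - E * a ^ 2 / 2 < (z' - 1) * b * a - E * a ^ 2 / 2 := by
      nlinarith [mul_pos (sub_pos.2 hzz') (mul_pos hb ha')]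
    exact mul_lt_mul_of_pos_left (Real.exp_lt_exp.2 hexp) hb
  -- continuity
  have hcont : ContinuousOn G (Icc 0 1) := by
    apply continuousOn_of_dominated (bound := fun a : ℝ => b * Real.exp (0 * a - E * a ^ 2 / 2))
    · intro z _
      exact (hint z).aestronglyMeasurable
    · intro z hz
      rw [ae_restrict_iff' measurableSet_Ioi]
      filter_upwards with a ha
      have ha' : (0:ℝ) < a := ha
      have h1 : (z - 1) * b * a - E * a ^ 2 / 2 ≤ 0 * a - E * a ^ 2 / 2 := by
        nlinarith [mul_nonneg (mul_nonneg (sub_nonneg.2 hz.2) hb.le) ha'.le]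
      have hpos : 0 < b * Real.exp ((z - 1) * b * a - E * a ^ 2 / 2) := by positivity
      rw [Real.norm_eq_abs, abs_of_pos hpos]
      exact mul_le_mul_of_nonneg_left (Real.exp_le_exp.2 h1) hb.le
    · exact (integ_aux E hE 0).const_mul b
    · filter_upwards with a
      apply Continuous.continuousOn
      fun_prop
  refine ⟨hmono, hcont, ?_⟩
  -- value of G 1
  have hG1 : G 1 = b * Real.sqrt (π / (2 * E)) := by
    have he : (fun a : ℝ => Real.exp ((1 - 1) * b * a - E * a ^ 2 / 2)) =
        fun a : ℝ => Real.exp (-(E / 2) * a ^ 2) := by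
      funext a; congr 1; ring
    have h4 : π / (E / 2) = 2 ^ 2 * (π / (2 * E)) := by field_simp
    simp only [G, MeasureTheory.integral_const_mul, he, integral_gaussian_Ioi, h4,
      Real.sqrt_mul (by norm_num : (0:ℝ) ≤ 2 ^ 2), Real.sqrt_sq (by norm_num : (0:ℝ) ≤ 2)]
    ring
  -- G 0 < 1
  have hexpint : IntegrableOn (fun a : ℝ => b * Real.exp (-b * a)) (Ioi 0) :=
    (exp_neg_integrableOn_Ioi 0 hb).const_mul b
  have hcomp : (∫ a in Ioi (0:ℝ), b * Real.exp (-b * a)) = 1 := by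
    have := integral_comp_mul_left_Ioi (fun u : ℝ => b * Real.exp (-u)) 0 hb
    simp only [mul_zero, neg_mul] at this ⊢
    rw [this, MeasureTheory.integral_const_mul, integral_exp_neg_Ioi_zero, smul_eq_mul]
    field_simp
  have hG0 : G 0 < 1 := by
    rw [← hcomp]
    apply strict_lt_int _ _ (hint 0) hexpint
    intro a ha
    have ha' : (0:ℝ) < a := ha
    have : (0 - 1) * b * a - E * a ^ 2 / 2 < -b * a := by
      nlinarith [mul_pos hE (pow_pos ha' 2)]
    exact mul_lt_mul_of_pos_left (Real.exp_lt_exp.2 this) hb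
  constructor
  · rintro ⟨z, hz, hGz⟩
    have : G z < G 1 := hmono ⟨hz.1, hz.2.le⟩ ⟨zero_le_one, le_refl 1⟩ hz.2
    rw [hGz, hG1] at this
    exact this
  · intro h
    have h1 : (1:ℝ) ∈ Ioo (G 0) (G 1) := ⟨hG0, by rw [hG1]; exact h⟩
    obtain ⟨z, hz, hGz⟩ := intermediate_value_Ioo zero_le_one hcont h1
    exact ⟨z, ⟨hz.1.le, hz.2⟩, hGz⟩
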